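/- arXiv:2307.05415 — 3 statements merged into one kernel-verified Lean document; each statement's English description precedes it below -/
import Mathlib

section
/- Let β, ε, γ > 0 and let s, e, i, r : ℝ → ℝ be differentiable functions satisfying the normalized SEIR system on [0,∞). If s(0), e(0), i(0), r(0) ∈ [0,1] and s(0) + e(0) + i(0) + r(0) = 1, then for every t ≥ 0 one has s(t), e(t), i(t), r(t) ∈ [0,1] and s(t) + e(t) + i(t) + r(t) = 1; that is, the simplex S = { x ∈ [0,1]⁴ : x₁ + x₂ + x₃ + x₄ = 1 } is positively invariant for the system. -/
/-!
The mass `s + e + i + r` is conserved, since the four right-hand sides sum to zero. For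
nonnegativity, fence all four components from below at once by `-η e^{K (t - T)}` with
`K = 4β + ε + γ`: at a time where every component is above the fence and one touches it, the
vector field pushes that component up faster than the fence rises (the only nonlinear term, `β s i`,
is controlled through the conserved mass). Letting `η → 0` gives nonnegativity on `[0, T]`, and the
upper bounds by `1` follow from the mass.
-/

open Set Filter Topology

theorem HasDerivWithinAt.eventually_pos_right {g : ℝ → ℝ} {g' x : ℝ}
    (hg : HasDerivWithinAt g g' (Ici x) x) (hx : g x = 0) (hg' : 0 < g') :
    ∀ᶠ z in 𝓝[>] x, 0 < g z := by
  have hslope : ∀ᶠ z in 𝓝[>] x, 0 < slope g x z :=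
    (hasDerivWithinAt_iff_tendsto_slope' (lt_irrefl x)).1 hg.Ioi_of_Ici (Ioi_mem_nhds hg')
  filter_upwards [hslope, self_mem_nhdsWithin] with z hz (hxz : x < z)
  rwa [slope_def_field, hx, sub_zero, div_pos_iff_of_pos_right (sub_pos.2 hxz)] at hz

/-- Fencing for finitely many functions at once: unlike applying
`image_le_of_deriv_right_lt_deriv_boundary` to each `f j` separately, the derivative estimate at a
contact point may use that all the other components are still above the fence. -/
theorem boundary_le_image_of_deriv_boundary_lt_deriv_right {ι : Type*} [Finite ι]
    {f f' : ι → ℝ → ℝ} {a b : ℝ} (hf : ∀ j, ContinuousOn (f j) (Icc a b))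
    (hf' : ∀ j, ∀ x ∈ Ico a b, HasDerivWithinAt (f j) (f' j x) (Ici x) x)
    {B B' : ℝ → ℝ} (ha : ∀ j, B a ≤ f j a) (hB : ContinuousOn B (Icc a b))
    (hB' : ∀ x ∈ Ico a b, HasDerivWithinAt B (B' x) (Ici x) x)
    (bound : ∀ x ∈ Ico a b, (∀ k, B x ≤ f k x) → ∀ j, f j x = B x → B' x < f' j x) :
    ∀ ⦃x⦄, x ∈ Icc a b → ∀ j, B x ≤ f j x := by
  set S := {x | ∀ j, B x ≤ f j x}
  have hS : IsClosed (S ∩ Icc a b) := by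
    have A : ContinuousOn (fun x => ((fun _ : ι => B x), fun j => f j x)) (Icc a b) :=
      (continuousOn_pi.2 fun _ => hB).prodMk (continuousOn_pi.2 hf)
    rw [inter_comm]
    exact A.preimage_isClosed_of_isClosed isClosed_Icc OrderClosedTopology.isClosed_le'
  refine fun x hx => hS.Icc_subset_of_forall_mem_nhdsWithin ha ?_ hx
  rintro x ⟨hxS, hxab⟩
  refine eventually_all.2 fun j => ?_
  have hg := (hf' j x hxab).sub (hB' x hxab)
  rcases (hxS j).lt_or_eq with hlt | heq
  · have hpos : ∀ᶠ z in 𝓝[Ici x] x, 0 < f j z - B z :=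
      hg.continuousWithinAt.eventually (lt_mem_nhds (sub_pos.2 hlt))
    filter_upwards [nhdsWithin_mono x Ioi_subset_Ici_self hpos] with z hz
    exact (sub_pos.1 hz).le
  · filter_upwards [hg.eventually_pos_right (sub_eq_zero.2 heq.symm)
      (sub_pos.2 (bound x hxab hxS j heq.symm))] with z hz
    exact (sub_pos.1 hz).le

structure IsSEIRSolution (β ε γ : ℝ) (s e i r : ℝ → ℝ) : Prop where
  hasDerivAt_s : ∀ t ∈ Ici (0 : ℝ), HasDerivAt s (-β * s t * i t) t
  hasDerivAt_e : ∀ t ∈ Ici (0 : ℝ), HasDerivAt e (β * s t * i t - ε * e t) t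
  hasDerivAt_i : ∀ t ∈ Ici (0 : ℝ), HasDerivAt i (ε * e t - γ * i t) t
  hasDerivAt_r : ∀ t ∈ Ici (0 : ℝ), HasDerivAt r (γ * i t) t

theorem seir_field_gt_of_eq_neg {β ε γ u s e i r : ℝ} (hβ : 0 < β) (hε : 0 < ε) (hγ : 0 < γ)
    (hu : 0 < u) (hu1 : u ≤ 1) (hs : -u ≤ s) (he : -u ≤ e) (hi : -u ≤ i) (hr : -u ≤ r)
    (hsum : s + e + i + r = 1) :
    (s = -u → -u * (4 * β + ε + γ) < -β * s * i) ∧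
      (e = -u → -u * (4 * β + ε + γ) < β * s * i - ε * e) ∧
      (i = -u → -u * (4 * β + ε + γ) < ε * e - γ * i) ∧
      (r = -u → -u * (4 * β + ε + γ) < γ * i) := by
  refine ⟨fun hs' => ?_, fun he' => ?_, fun hi' => ?_, fun hr' => ?_⟩
  · subst hs'
    nlinarith [mul_le_mul_of_nonneg_left hi (mul_nonneg hβ.le hu.le),
      mul_le_mul_of_nonneg_left hu1 (mul_nonneg hβ.le hu.le)]
  · subst he'
    -- `s i ≥ -u (s + i) - u²`, and the total mass gives `s + i ≤ 1 + 2u`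
    have hsi : -(4 * u) ≤ s * i := by
      nlinarith [mul_nonneg (neg_le_iff_add_nonneg.1 hs) (neg_le_iff_add_nonneg.1 hi)]
    nlinarith [mul_le_mul_of_nonneg_left hsi hβ.le]
  · subst hi'
    nlinarith [mul_le_mul_of_nonneg_left he hε.le]
  · subst hr'
    nlinarith [mul_le_mul_of_nonneg_left hi hγ.le]

namespace IsSEIRSolution

variable {β ε γ : ℝ} {s e i r : ℝ → ℝ}

theorem hasDerivAt_comp (h : IsSEIRSolution β ε γ s e i r) :
    ∀ j, ∀ t ∈ Ici (0 : ℝ), HasDerivAt (![s, e, i, r] j)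
      (![-β * s t * i t, β * s t * i t - ε * e t, ε * e t - γ * i t, γ * i t] j) t := by
  intro j t ht
  fin_cases j
  exacts [h.hasDerivAt_s t ht, h.hasDerivAt_e t ht, h.hasDerivAt_i t ht, h.hasDerivAt_r t ht]

theorem sum_eq (h : IsSEIRSolution β ε γ s e i r) :
    ∀ t ∈ Ici (0 : ℝ), s t + e t + i t + r t = s 0 + e 0 + i 0 + r 0 := by
  intro t ht
  have hderiv : ∀ x ∈ Ici (0 : ℝ), HasDerivAt (s + e + i + r) 0 x := fun x hx =>
    ((((h.hasDerivAt_s x hx).add (h.hasDerivAt_e x hx)).add (h.hasDerivAt_i x hx)).add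
      (h.hasDerivAt_r x hx)).congr_deriv (by ring)
  exact constant_of_has_deriv_right_zero
    (fun x hx => (hderiv x hx.1).continuousAt.continuousWithinAt)
    (fun x hx => (hderiv x hx.1).hasDerivWithinAt) t ⟨ht, le_rfl⟩

theorem neg_le (h : IsSEIRSolution β ε γ s e i r) (hβ : 0 < β) (hε : 0 < ε)
    (hγ : 0 < γ) (hs0 : 0 ≤ s 0) (he0 : 0 ≤ e 0) (hi0 : 0 ≤ i 0) (hr0 : 0 ≤ r 0)
    (hsum0 : s 0 + e 0 + i 0 + r 0 = 1) {T η : ℝ} (hT : 0 ≤ T) (hη : 0 < η) (hη1 : η ≤ 1) :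
    ∀ j, -η ≤ ![s, e, i, r] j T := by
  set K := 4 * β + ε + γ
  set B : ℝ → ℝ := fun t => -(η * Real.exp (K * (t - T)))
  have hB : ∀ t, HasDerivAt B (B t * K) t := fun t =>
    ((((hasDerivAt_id t).sub_const T).const_mul K).exp.const_mul η).neg.congr_deriv
      (by simp only [B, id]; ring)
  have key := boundary_le_image_of_deriv_boundary_lt_deriv_right (a := 0) (b := T)
    (f' := fun j t => ![-β * s t * i t, β * s t * i t - ε * e t, ε * e t - γ * i t, γ * i t] j)
    (fun j t ht => (h.hasDerivAt_comp j t ht.1).continuousAt.continuousWithinAt)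
    (fun j t ht => (h.hasDerivAt_comp j t ht.1).hasDerivWithinAt)
    ?_ (fun t _ => (hB t).continuousAt.continuousWithinAt) (fun t _ => (hB t).hasDerivWithinAt) ?_
  · simpa [B] using key ⟨hT, le_rfl⟩
  · have hB0 : B 0 ≤ 0 := neg_nonpos.2 (by positivity)
    intro j
    fin_cases j
    exacts [hB0.trans hs0, hB0.trans he0, hB0.trans hi0, hB0.trans hr0]
  · intro x hx hall j hj
    have hexp : Real.exp (K * (x - T)) ≤ 1 :=
      Real.exp_le_one_iff.2 (mul_nonpos_of_nonneg_of_nonpos (by positivity) (by linarith [hx.2]))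
    have hu : 0 < η * Real.exp (K * (x - T)) := by positivity
    have hu1 : η * Real.exp (K * (x - T)) ≤ 1 := mul_le_one₀ hη1 (Real.exp_pos _).le hexp
    obtain ⟨hs', he', hi', hr'⟩ := seir_field_gt_of_eq_neg hβ hε hγ hu hu1 (hall 0) (hall 1)
      (hall 2) (hall 3) ((h.sum_eq x hx.1).trans hsum0)
    fin_cases j
    exacts [hs' hj, he' hj, hi' hj, hr' hj]

theorem nonneg (h : IsSEIRSolution β ε γ s e i r) (hβ : 0 < β) (hε : 0 < ε) (hγ : 0 < γ)
    (hs0 : 0 ≤ s 0) (he0 : 0 ≤ e 0) (hi0 : 0 ≤ i 0) (hr0 : 0 ≤ r 0)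
    (hsum0 : s 0 + e 0 + i 0 + r 0 = 1) {t : ℝ} (ht : 0 ≤ t) :
    0 ≤ s t ∧ 0 ≤ e t ∧ 0 ≤ i t ∧ 0 ≤ r t := by
  have H : ∀ j, 0 ≤ ![s, e, i, r] j t := fun j =>
    le_of_forall_lt_imp_le_of_dense fun c hc =>
      (show c ≤ -min 1 (-c) by linarith [min_le_right 1 (-c)]).trans
        (h.neg_le hβ hε hγ hs0 he0 hi0 hr0 hsum0 ht (lt_min one_pos (neg_pos.2 hc))
          (min_le_left _ _) j)
  exact ⟨H 0, H 1, H 2, H 3⟩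

end IsSEIRSolution

/-- **Positive invariance of the simplex for the normalized SEIR model.**
For parameters `β, ε, γ > 0` and differentiable `s, e, i, r : ℝ → ℝ` satisfying
the normalized SEIR system on `[0,∞)`, if the initial data lie in `[0,1]` and
sum to `1`, then for every `t ≥ 0` all components stay in `[0,1]` and their sum
remains `1`: the simplex `S = {x ∈ [0,1]⁴ : ‖x‖₁ = 1}` is positively invariant. -/
theorem seir_simplex_positively_invariant
    (β ε γ : ℝ) (hβ : 0 < β) (hε : 0 < ε) (hγ : 0 < γ)
    (s e i r : ℝ → ℝ)
    (hs : ∀ t ∈ Set.Ici (0 : ℝ), HasDerivAt s (-β * s t * i t) t)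
    (he : ∀ t ∈ Set.Ici (0 : ℝ), HasDerivAt e (β * s t * i t - ε * e t) t)
    (hi : ∀ t ∈ Set.Ici (0 : ℝ), HasDerivAt i (ε * e t - γ * i t) t)
    (hr : ∀ t ∈ Set.Ici (0 : ℝ), HasDerivAt r (γ * i t) t)
    (hs0 : s 0 ∈ Set.Icc (0 : ℝ) 1) (he0 : e 0 ∈ Set.Icc (0 : ℝ) 1)
    (hi0 : i 0 ∈ Set.Icc (0 : ℝ) 1) (hr0 : r 0 ∈ Set.Icc (0 : ℝ) 1)
    (hsum0 : s 0 + e 0 + i 0 + r 0 = 1) :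
    ∀ t ∈ Set.Ici (0 : ℝ),
      s t ∈ Set.Icc (0 : ℝ) 1 ∧ e t ∈ Set.Icc (0 : ℝ) 1 ∧
      i t ∈ Set.Icc (0 : ℝ) 1 ∧ r t ∈ Set.Icc (0 : ℝ) 1 ∧
      s t + e t + i t + r t = 1 := by
  intro t ht
  have h : IsSEIRSolution β ε γ s e i r := ⟨hs, he, hi, hr⟩
  have hsum : s t + e t + i t + r t = 1 := (h.sum_eq t ht).trans hsum0
  obtain ⟨hst, het, hit, hrt⟩ := h.nonneg hβ hε hγ hs0.1 he0.1 hi0.1 hr0.1 hsum0 ht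
  exact ⟨⟨hst, by linarith⟩, ⟨het, by linarith⟩, ⟨hit, by linarith⟩, ⟨hrt, by linarith⟩, hsum⟩
end

section
/- Let β, ε, γ > 0, let λ, ν : [0,T] → ℝ be continuous control functions with λ(t) ∈ [0,1] and ν(t) ≥ 0 for all t ∈ [0,T], and let s, e, i, r : [0,T] → ℝ be differentiable functions satisfying the controlled SEIR system on [0,T] with s(0), e(0), i(0), r(0) ≥ 0 and s(0) + e(0) + i(0) + r(0) = 1. Then for every t ∈ [0,T], s(t), e(t), i(t), r(t) ∈ [0,1] and s(t) + e(t) + i(t) + r(t) = 1. -/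
/-!
Total population is conserved, so it suffices to show that no compartment becomes negative.
The susceptibles solve the scalar linear equation `s' = -(β(1 - λ) i + ν) s`; once `s ≥ 0`,
the pair `(e, i)` solves a linear system whose off-diagonal coefficients `β(1 - λ) s` and `ε`
are nonnegative (a Metzler system). For a linear system `u' = A(t) u` with bounded Metzler
coefficients the energy `V = ∑ₖ (uₖ⁻)²` of the negative parts satisfies `V' ≤ K V` and
`V(0) = 0`, hence vanishes by Grönwall's inequality. Finally `r' = γ i + ν s ≥ 0`.
-/

open Set Topology

theorem negPart_mul_self {α : Type*} [Ring α] [LinearOrder α] [IsOrderedRing α] (x : α) :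
    x⁻ * x = -x⁻ ^ 2 := by
  rcases le_total 0 x with hx | hx
  · simp [negPart_eq_zero.mpr hx]
  · simp [negPart_eq_neg.mpr hx, sq]

theorem hasDerivAt_negPart_sq (x : ℝ) : HasDerivAt (fun y : ℝ => y⁻ ^ 2) (-2 * x⁻) x := by
  have hcont : Continuous fun y : ℝ => y⁻ := continuous_neg.max continuous_const
  refine hasDerivAt_of_hasDerivAt_of_ne' (f := fun y : ℝ => y⁻ ^ 2) (g := fun y => -2 * y⁻)
    (x := 0) (fun y (hy : y ≠ 0) => ?_)
    (hcont.pow 2).continuousAt (continuous_const.mul hcont).continuousAt x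
  rcases hy.lt_or_gt with hy | hy
  · have h : (fun y : ℝ => y⁻ ^ 2) =ᶠ[𝓝 y] fun y => y ^ 2 := by
      filter_upwards [Iio_mem_nhds hy] with z (hz : z < 0)
      simp [negPart_eq_neg.mpr hz.le]
    simpa [negPart_eq_neg.mpr hy.le] using (hasDerivAt_pow 2 y).congr_of_eventuallyEq h
  · have h : (fun y : ℝ => y⁻ ^ 2) =ᶠ[𝓝 y] fun _ => 0 := by
      filter_upwards [Ioi_mem_nhds hy] with z (hz : 0 < z)
      simp [negPart_eq_zero.mpr hz.le]
    simpa [negPart_eq_zero.mpr hy.le] using (hasDerivAt_const y (0 : ℝ)).congr_of_eventuallyEq h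

theorem HasDerivAt.negPart_sq {f : ℝ → ℝ} {f' x : ℝ} (hf : HasDerivAt f f' x) :
    HasDerivAt (fun t => (f t)⁻ ^ 2) (-2 * (f x)⁻ * f') x :=
  (hasDerivAt_negPart_sq (f x)).comp x hf

theorem nonpos_of_hasDerivAt_le_mul {V V' : ℝ → ℝ} {a b K : ℝ}
    (hV : ∀ x ∈ Icc a b, HasDerivAt V (V' x) x) (hbound : ∀ x ∈ Ico a b, V' x ≤ K * V x)
    (ha : V a ≤ 0) : ∀ x ∈ Icc a b, V x ≤ 0 := by
  intro x hx
  simpa [gronwallBound_ε0_δ0] using le_gronwallBound_of_liminf_deriv_right_le (ε := 0)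
    (fun y hy => (hV y hy).continuousAt.continuousWithinAt)
    (fun y hy r hr => (hV y (Ico_subset_Icc_self hy)).hasDerivWithinAt.liminf_right_slope_le hr)
    ha (by simpa using hbound) x hx

theorem nonneg_of_neg_sum_negPart_mul_deriv_le {ι : Type*} [Fintype ι] {f f' : ι → ℝ → ℝ}
    {a b K : ℝ} (hf : ∀ k, ∀ x ∈ Icc a b, HasDerivAt (f k) (f' k x) x)
    (hK : ∀ x ∈ Ico a b, -∑ k, (f k x)⁻ * f' k x ≤ K * ∑ k, (f k x)⁻ ^ 2)
    (ha : ∀ k, 0 ≤ f k a) (k : ι) : ∀ x ∈ Icc a b, 0 ≤ f k x := by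
  have hV : ∀ x ∈ Icc a b, ∑ j, (f j x)⁻ ^ 2 ≤ 0 := by
    refine nonpos_of_hasDerivAt_le_mul (K := 2 * K)
      (fun x hx => HasDerivAt.fun_sum fun j _ => (hf j x hx).negPart_sq) (fun x hx => ?_) ?_
    · have := hK x hx
      simp only [mul_assoc, ← Finset.mul_sum]
      linarith
    · simp [negPart_eq_zero.mpr (ha _)]
  intro x hx
  have hk : (f k x)⁻ ^ 2 ≤ 0 :=
    (Finset.single_le_sum (fun j _ => sq_nonneg (f j x)⁻) (Finset.mem_univ k)).trans (hV x hx)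
  exact negPart_eq_zero.mp (pow_eq_zero_iff two_ne_zero |>.mp (le_antisymm hk (sq_nonneg _)))

theorem neg_negPart_mul_mul_le {x y c : ℝ} (h : x = y ∨ 0 ≤ c) :
    -(x⁻ * (c * y)) ≤ |c| * (x⁻ ^ 2 + y⁻ ^ 2) := by
  have hx := negPart_nonneg x
  have hy := negPart_nonneg y
  rcases h with rfl | hc
  · nlinarith [negPart_mul_self x, le_abs_self c, neg_abs_le c, sq_nonneg x⁻]
  · rw [abs_of_nonneg hc]
    nlinarith [neg_le_negPart y, mul_nonneg hc hx, sq_nonneg (x⁻ - y⁻)]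

theorem exists_forall_abs_le_of_continuousOn {ι : Type*} [Fintype ι] {g : ι → ℝ → ℝ} {s : Set ℝ}
    (hs : IsCompact s) (hg : ∀ k, ContinuousOn (g k) s) :
    ∃ M, ∀ k, ∀ x ∈ s, |g k x| ≤ M := by
  obtain ⟨M, hM⟩ := hs.exists_bound_of_continuousOn
    (continuousOn_finsetSum Finset.univ fun k _ => (hg k).abs)
  refine ⟨M, fun k x hx => ?_⟩
  calc |g k x| ≤ ∑ j, |g j x| :=
        Finset.single_le_sum (f := fun j => |g j x|) (fun j _ => abs_nonneg _) (Finset.mem_univ k)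
    _ ≤ M := (le_abs_self _).trans (hM x hx)

theorem nonneg_of_hasDerivAt_metzler {ι : Type*} [Fintype ι] {u : ι → ℝ → ℝ}
    {A : ℝ → Matrix ι ι ℝ} {a b : ℝ} (hA : ∀ k j, ContinuousOn (fun t => A t k j) (Icc a b))
    (hoff : ∀ t ∈ Icc a b, ∀ k j, k ≠ j → 0 ≤ A t k j)
    (hu : ∀ k, ∀ t ∈ Icc a b, HasDerivAt (u k) (∑ j, A t k j * u j t) t)
    (ha : ∀ k, 0 ≤ u k a) (k : ι) : ∀ t ∈ Icc a b, 0 ≤ u k t := by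
  obtain ⟨M, hM⟩ := exists_forall_abs_le_of_continuousOn
    (g := fun kj : ι × ι => fun t => A t kj.1 kj.2) isCompact_Icc fun kj => hA kj.1 kj.2
  refine nonneg_of_neg_sum_negPart_mul_deriv_le (K := 2 * Fintype.card ι * M) hu
    (fun t ht => ?_) ha k
  have hterm : ∀ k j, -((u k t)⁻ * (A t k j * u j t)) ≤ M * ((u k t)⁻ ^ 2 + (u j t)⁻ ^ 2) :=
    fun k j => (neg_negPart_mul_mul_le ((eq_or_ne k j).imp (congrArg (u · t))
      (hoff t (Ico_subset_Icc_self ht) k j))).trans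
      (mul_le_mul_of_nonneg_right (hM (k, j) t (Ico_subset_Icc_self ht)) (by positivity))
  calc -∑ k, (u k t)⁻ * ∑ j, A t k j * u j t
      = ∑ k, ∑ j, -((u k t)⁻ * (A t k j * u j t)) := by
        simp only [Finset.mul_sum, Finset.sum_neg_distrib]
    _ ≤ ∑ k, ∑ j, M * ((u k t)⁻ ^ 2 + (u j t)⁻ ^ 2) :=
        Finset.sum_le_sum fun k _ => Finset.sum_le_sum fun j _ => hterm k j
    _ = 2 * Fintype.card ι * M * ∑ k, (u k t)⁻ ^ 2 := by
        simp only [← Finset.mul_sum, Finset.sum_add_distrib, Finset.sum_const, Finset.card_univ,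
          nsmul_eq_mul]
        ring

theorem nonneg_of_hasDerivAt_mul_self {f c : ℝ → ℝ} {a b : ℝ} (hc : ContinuousOn c (Icc a b))
    (hf : ∀ t ∈ Icc a b, HasDerivAt f (c t * f t) t) (ha : 0 ≤ f a) :
    ∀ t ∈ Icc a b, 0 ≤ f t :=
  nonneg_of_hasDerivAt_metzler (u := fun _ : Unit => f) (A := fun t _ _ => c t) (fun _ _ => hc)
    (fun _ _ _ _ h => absurd (Subsingleton.elim _ _) h) (fun _ t ht => by simpa using hf t ht)
    (fun _ => ha) ()

theorem nonneg_of_hasDerivAt_cooperative₂ {u v c₁₁ c₁₂ c₂₁ c₂₂ : ℝ → ℝ} {a b : ℝ}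
    (h₁₁ : ContinuousOn c₁₁ (Icc a b)) (h₁₂ : ContinuousOn c₁₂ (Icc a b))
    (h₂₁ : ContinuousOn c₂₁ (Icc a b)) (h₂₂ : ContinuousOn c₂₂ (Icc a b))
    (h₁₂_nonneg : ∀ t ∈ Icc a b, 0 ≤ c₁₂ t) (h₂₁_nonneg : ∀ t ∈ Icc a b, 0 ≤ c₂₁ t)
    (hu : ∀ t ∈ Icc a b, HasDerivAt u (c₁₁ t * u t + c₁₂ t * v t) t)
    (hv : ∀ t ∈ Icc a b, HasDerivAt v (c₂₁ t * u t + c₂₂ t * v t) t)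
    (hua : 0 ≤ u a) (hva : 0 ≤ v a) :
    ∀ t ∈ Icc a b, 0 ≤ u t ∧ 0 ≤ v t := by
  have h := nonneg_of_hasDerivAt_metzler (a := a) (b := b) (u := ![u, v])
    (A := fun t => !![c₁₁ t, c₁₂ t; c₂₁ t, c₂₂ t])
    (by simp [Fin.forall_fin_two, h₁₁, h₁₂, h₂₁, h₂₂])
    (fun t ht => by simp [Fin.forall_fin_two, h₁₂_nonneg t ht, h₂₁_nonneg t ht])
    (Fin.forall_fin_two.2
      ⟨by simpa [Fin.sum_univ_two] using hu, by simpa [Fin.sum_univ_two] using hv⟩)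
    (by simp [Fin.forall_fin_two, hua, hva])
  exact fun t ht => ⟨h 0 t ht, h 1 t ht⟩

theorem eq_of_hasDerivAt_zero_of_mem_Icc {f : ℝ → ℝ} {a b : ℝ}
    (hf : ∀ x ∈ Icc a b, HasDerivAt f 0 x) : ∀ x ∈ Icc a b, f x = f a :=
  constant_of_has_deriv_right_zero (HasDerivAt.continuousOn hf) fun x hx =>
    (hf x (Ico_subset_Icc_self hx)).hasDerivWithinAt

/-- **Positive invariance of the simplex for the controlled SEIR model.**
For `β, ε, γ > 0`, continuous controls `lam, nu` on `[0,T]` with `λ(t) ∈ [0,1]`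
and `ν(t) ≥ 0`, and differentiable `s, e, i, r` satisfying the controlled SEIR
system on `[0,T]` with nonnegative initial data summing to `1`, every component
stays in `[0,1]` and the components sum to `1` on all of `[0,T]`. -/
theorem controlled_seir_simplex_positively_invariant
    (T : ℝ) (β ε γ : ℝ) (hβ : 0 < β) (hε : 0 < ε) (hγ : 0 < γ)
    (lam nu : ℝ → ℝ)
    (hlam : ContinuousOn lam (Set.Icc 0 T)) (hnu : ContinuousOn nu (Set.Icc 0 T))
    (hlam01 : ∀ t ∈ Set.Icc (0 : ℝ) T, lam t ∈ Set.Icc (0 : ℝ) 1)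
    (hnu0 : ∀ t ∈ Set.Icc (0 : ℝ) T, 0 ≤ nu t)
    (s e i r : ℝ → ℝ)
    (hs : ∀ t ∈ Set.Icc (0 : ℝ) T,
      HasDerivAt s (-β * (1 - lam t) * s t * i t - nu t * s t) t)
    (he : ∀ t ∈ Set.Icc (0 : ℝ) T,
      HasDerivAt e (β * (1 - lam t) * s t * i t - ε * e t) t)
    (hi : ∀ t ∈ Set.Icc (0 : ℝ) T, HasDerivAt i (ε * e t - γ * i t) t)
    (hr : ∀ t ∈ Set.Icc (0 : ℝ) T, HasDerivAt r (γ * i t + nu t * s t) t)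
    (hs0 : 0 ≤ s 0) (he0 : 0 ≤ e 0) (hi0 : 0 ≤ i 0) (hr0 : 0 ≤ r 0)
    (hsum0 : s 0 + e 0 + i 0 + r 0 = 1) :
    ∀ t ∈ Set.Icc (0 : ℝ) T,
      s t ∈ Set.Icc (0 : ℝ) 1 ∧ e t ∈ Set.Icc (0 : ℝ) 1 ∧
      i t ∈ Set.Icc (0 : ℝ) 1 ∧ r t ∈ Set.Icc (0 : ℝ) 1 ∧
      s t + e t + i t + r t = 1 := by
  have htransmission : ContinuousOn (fun t => β * (1 - lam t)) (Icc 0 T) := by fun_prop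
  have hs_nonneg : ∀ t ∈ Icc 0 T, 0 ≤ s t :=
    nonneg_of_hasDerivAt_mul_self (c := fun t => -(β * (1 - lam t) * i t + nu t))
      ((htransmission.mul (HasDerivAt.continuousOn hi)).add hnu).neg
      (fun t ht => (hs t ht).congr_deriv (by ring)) hs0
  have hei_nonneg : ∀ t ∈ Icc 0 T, 0 ≤ e t ∧ 0 ≤ i t :=
    nonneg_of_hasDerivAt_cooperative₂ (c₁₁ := fun _ => -ε) (c₁₂ := fun t => β * (1 - lam t) * s t)
      (c₂₁ := fun _ => ε) (c₂₂ := fun _ => -γ)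
      continuousOn_const (htransmission.mul (HasDerivAt.continuousOn hs)) continuousOn_const
      continuousOn_const
      (fun t ht => mul_nonneg (mul_nonneg hβ.le (sub_nonneg.2 (hlam01 t ht).2)) (hs_nonneg t ht))
      (fun _ _ => hε.le) (fun t ht => (he t ht).congr_deriv (by ring))
      (fun t ht => (hi t ht).congr_deriv (by ring)) he0 hi0
  have hr_mono : MonotoneOn r (Icc 0 T) :=
    monotoneOn_of_hasDerivWithinAt_nonneg (convex_Icc 0 T) (HasDerivAt.continuousOn hr)
      (fun t ht => (hr t (interior_subset ht)).hasDerivWithinAt)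
      (fun t ht => have ht := interior_subset ht
        add_nonneg (mul_nonneg hγ.le (hei_nonneg t ht).2) (mul_nonneg (hnu0 t ht) (hs_nonneg t ht)))
  have hsum : ∀ t ∈ Icc 0 T, s t + e t + i t + r t = 1 := fun t ht =>
    hsum0 ▸ eq_of_hasDerivAt_zero_of_mem_Icc (f := fun t => s t + e t + i t + r t)
      (fun x hx => (((hs x hx).add (he x hx)).add (hi x hx) |>.add (hr x hx)).congr_deriv
        (by ring)) t ht
  intro t ht
  have hr_nonneg : 0 ≤ r t := hr0.trans (hr_mono (left_mem_Icc.2 (ht.1.trans ht.2)) ht ht.1)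
  obtain ⟨he_nonneg, hi_nonneg⟩ := hei_nonneg t ht
  have hs_nonneg := hs_nonneg t ht
  refine ⟨⟨?_, ?_⟩, ⟨?_, ?_⟩, ⟨?_, ?_⟩, ⟨?_, ?_⟩, hsum t ht⟩ <;> linarith [hsum t ht]
end

section
/- Let β, ε, γ > 0, δ₁, δ₂, δ₃, δ₄ ≥ 0, let λ, φ : [0,T] → ℝ be continuous with λ(t) ≤ 1 and φ(t) ≥ 0 for all t, and let s, e, i, r : [0,T] → ℝ be differentiable functions satisfying the SEIR system with border control on [0,T] with s(0), e(0), i(0), r(0) ≥ 0. Then s(t), e(t), i(t), r(t) ≥ 0 for all t ∈ [0,T]; that is, the nonnegative orthant is positively invariant for the border-control system. -/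
open Filter Set Topology

/-!
Let `N = s⁻ + e⁻ + i⁻ + r⁻` be the `ℓ¹`-distance of the state to the nonnegative orthant. Where a
component is nonpositive, the inflow terms `φ δₖ ≥ 0` can only push it up, and the one
sign-indefinite term `β (1 - λ) s i` is controlled by `s⁻` and `i⁻` because `1 - λ`, `s` and `i`
are bounded on the compact interval `[0, T]`. Hence the upper right Dini derivative of `N` is at
most `K N` for a constant `K`, and Grönwall's inequality with `N 0 = 0` forces `N ≡ 0`.
-/

/-- The upper right Dini derivative `limsup_{z → x⁺} slope f x z` is at most `g`. -/
def UpperRightDiniLE (f : ℝ → ℝ) (g x : ℝ) : Prop :=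
  ∀ r, g < r → ∀ᶠ z in 𝓝[>] x, slope f x z < r

namespace UpperRightDiniLE

variable {f h : ℝ → ℝ} {g g' x : ℝ}

theorem mono (hf : UpperRightDiniLE f g x) (hg : g ≤ g') : UpperRightDiniLE f g' x :=
  fun r hr => hf r (hg.trans_lt hr)

theorem add (hf : UpperRightDiniLE f g x) (hh : UpperRightDiniLE h g' x) :
    UpperRightDiniLE (fun t => f t + h t) (g + g') x := by
  intro r hr
  filter_upwards [hf ((r + g - g') / 2) (by linarith), hh ((r - g + g') / 2) (by linarith)]
    with z hfz hhz
  have hslope : slope (fun t => f t + h t) x z = slope f x z + slope h x z := by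
    simp only [slope_def_field, add_sub_add_comm, add_div]
  linarith

end UpperRightDiniLE

theorem nonpos_of_upperRightDiniLE {N : ℝ → ℝ} {a b K : ℝ} (hN : ContinuousOn N (Icc a b))
    (ha : N a ≤ 0) (hD : ∀ x ∈ Ico a b, UpperRightDiniLE N (K * N x) x) :
    ∀ x ∈ Icc a b, N x ≤ 0 := by
  intro x hx
  simpa only [gronwallBound_ε0_δ0] using le_gronwallBound_of_liminf_deriv_right_le hN
    (fun x hx r hr => (hD x hx r hr).frequently) ha (fun x _ => (add_zero _).ge) x hx

theorem slope_negPart_le_negPart_slope {f : ℝ → ℝ} {x z : ℝ} (hx : f x ≤ 0) (hxz : x < z) :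
    slope (fun t => (f t)⁻) x z ≤ (slope f x z)⁻ := by
  have hzx : 0 < z - x := sub_pos.2 hxz
  rw [slope_def_field, slope_def_field, negPart_eq_neg.2 hx]
  rcases le_total (f z) 0 with hz | hz
  · rw [negPart_eq_neg.2 hz, neg_sub_neg, ← neg_sub, neg_div]
    exact neg_le_negPart _
  · rw [negPart_eq_zero.2 hz, zero_sub, neg_neg]
    exact (div_nonpos_of_nonpos_of_nonneg hx hzx.le).trans (negPart_nonneg _)

theorem HasDerivAt.upperRightDiniLE_negPart {f : ℝ → ℝ} {f' g x : ℝ} (hf : HasDerivAt f f' x)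
    (hg : 0 ≤ g) (hfg : f x ≤ 0 → -f' ≤ g) : UpperRightDiniLE (fun t => (f t)⁻) g x := by
  intro r hr
  rcases lt_or_ge 0 (f x) with hpos | hnonpos
  · have hzero : ∀ᶠ z in 𝓝 x, (f z)⁻ = 0 :=
      (hf.continuousAt.eventually_const_lt hpos).mono fun z hz => negPart_eq_zero.2 hz.le
    filter_upwards [nhdsWithin_le_nhds hzero] with z hz
    rw [slope_def_field, hz, negPart_eq_zero.2 hpos.le]
    simpa using hg.trans_lt hr
  · have hslope : Tendsto (slope f x) (𝓝[>] x) (𝓝 f') :=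
      (hasDerivAt_iff_tendsto_slope.1 hf).mono_left (nhdsWithin_mono x fun z hz => ne_of_gt hz)
    have hlim : f'⁻ < r := lt_of_le_of_lt (max_le (hfg hnonpos) hg) hr
    filter_upwards [(continuous_negPart.tendsto f').comp hslope |>.eventually_lt_const hlim,
      self_mem_nhdsWithin] with z hz hxz
    exact (slope_negPart_le_negPart_slope hnonpos hxz).trans_lt hz

theorem neg_mul_le_abs_mul_negPart_add (u v : ℝ) : -(u * v) ≤ |v| * u⁻ + |u| * v⁻ := by
  rcases le_total u 0 with hu | hu <;> rcases le_total v 0 with hv | hv <;>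
    simp only [negPart_eq_neg.2, negPart_eq_zero.2, abs_of_nonpos, abs_of_nonneg, hu, hv] <;>
    nlinarith

section SEIR

variable {β ε γ δ c p B S E I : ℝ}

theorem neg_susceptible_rhs_le (hβ : 0 ≤ β) (hc : 0 ≤ c) (hcB : c ≤ B) (hIB : |I| ≤ B)
    (hp : 0 ≤ p) (hδ : 0 ≤ δ) (hS : S ≤ 0) : -(-β * c * S * I + p * δ) ≤ β * B ^ 2 * S⁻ := by
  have hSI : S * I ≤ B * S⁻ := by
    rw [negPart_eq_neg.2 hS]
    nlinarith [mul_le_mul_of_nonneg_left ((neg_le_abs I).trans hIB) (neg_nonneg.2 hS)]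
  have hB : 0 ≤ B := (abs_nonneg I).trans hIB
  calc -(-β * c * S * I + p * δ) ≤ β * c * (S * I) := by nlinarith [mul_nonneg hp hδ]
    _ ≤ β * c * (B * S⁻) := mul_le_mul_of_nonneg_left hSI (mul_nonneg hβ hc)
    _ ≤ β * B * (B * S⁻) := by gcongr
    _ = β * B ^ 2 * S⁻ := by ring

theorem neg_exposed_rhs_le (hβ : 0 ≤ β) (hε : 0 ≤ ε) (hc : 0 ≤ c) (hcB : c ≤ B)
    (hSB : |S| ≤ B) (hIB : |I| ≤ B) (hp : 0 ≤ p) (hδ : 0 ≤ δ) (hE : E ≤ 0) :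
    -(β * c * S * I - ε * E + p * δ) ≤ β * B ^ 2 * (S⁻ + I⁻) + ε * E⁻ := by
  have hSI : -(S * I) ≤ B * (S⁻ + I⁻) := by
    have := neg_mul_le_abs_mul_negPart_add S I
    nlinarith [mul_le_mul_of_nonneg_right hIB (negPart_nonneg S),
      mul_le_mul_of_nonneg_right hSB (negPart_nonneg I)]
  have hB : 0 ≤ B := (abs_nonneg I).trans hIB
  have hεE : ε * E ≤ ε * E⁻ := mul_le_mul_of_nonneg_left (hE.trans (negPart_nonneg E)) hε
  calc -(β * c * S * I - ε * E + p * δ) ≤ β * c * -(S * I) + ε * E⁻ := by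
        nlinarith [mul_nonneg hp hδ]
    _ ≤ β * c * (B * (S⁻ + I⁻)) + ε * E⁻ := by gcongr
    _ ≤ β * B * (B * (S⁻ + I⁻)) + ε * E⁻ := by gcongr
    _ = β * B ^ 2 * (S⁻ + I⁻) + ε * E⁻ := by ring

theorem neg_infected_rhs_le (hε : 0 ≤ ε) (hγ : 0 ≤ γ) (hp : 0 ≤ p) (hδ : 0 ≤ δ) (hI : I ≤ 0) :
    -(ε * E - γ * I + p * δ) ≤ ε * E⁻ := by
  nlinarith [mul_le_mul_of_nonneg_left (neg_le_negPart E) hε, mul_nonneg hp hδ,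
    mul_nonpos_of_nonneg_of_nonpos hγ hI]

theorem neg_recovered_rhs_le (hγ : 0 ≤ γ) (hp : 0 ≤ p) (hδ : 0 ≤ δ) :
    -(γ * I + p * δ) ≤ γ * I⁻ := by
  nlinarith [mul_le_mul_of_nonneg_left (neg_le_negPart I) hγ, mul_nonneg hp hδ]

end SEIR

def orthantDefect (s e i r : ℝ → ℝ) (t : ℝ) : ℝ := (s t)⁻ + (e t)⁻ + (i t)⁻ + (r t)⁻

section OrthantDefect

variable {s e i r : ℝ → ℝ}

theorem orthantDefect_nonpos_iff {t : ℝ} :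
    orthantDefect s e i r t ≤ 0 ↔ 0 ≤ s t ∧ 0 ≤ e t ∧ 0 ≤ i t ∧ 0 ≤ r t := by
  simp only [orthantDefect, ← negPart_nonpos (a := s t), ← negPart_nonpos (a := e t),
    ← negPart_nonpos (a := i t), ← negPart_nonpos (a := r t)]
  constructor
  · intro h
    refine ⟨?_, ?_, ?_, ?_⟩ <;>
      linarith [negPart_nonneg (s t), negPart_nonneg (e t), negPart_nonneg (i t),
        negPart_nonneg (r t)]
  · rintro ⟨hs, he, hi, hr⟩
    linarith

theorem ContinuousOn.orthantDefect {u : Set ℝ} (hs : ContinuousOn s u) (he : ContinuousOn e u)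
    (hi : ContinuousOn i u) (hr : ContinuousOn r u) : ContinuousOn (orthantDefect s e i r) u :=
  (((continuous_negPart.comp_continuousOn hs).add (continuous_negPart.comp_continuousOn he)).add
    (continuous_negPart.comp_continuousOn hi)).add (continuous_negPart.comp_continuousOn hr)

theorem upperRightDiniLE_orthantDefect {β ε γ δ₁ δ₂ δ₃ δ₄ l p B x : ℝ}
    (hβ : 0 ≤ β) (hε : 0 ≤ ε) (hγ : 0 ≤ γ)
    (hδ₁ : 0 ≤ δ₁) (hδ₂ : 0 ≤ δ₂) (hδ₃ : 0 ≤ δ₃) (hδ₄ : 0 ≤ δ₄) (hl : l ≤ 1) (hp : 0 ≤ p)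
    (hlB : |1 - l| ≤ B) (hsB : |s x| ≤ B) (hiB : |i x| ≤ B)
    (hs : HasDerivAt s (-β * (1 - l) * s x * i x + p * δ₁) x)
    (he : HasDerivAt e (β * (1 - l) * s x * i x - ε * e x + p * δ₂) x)
    (hi : HasDerivAt i (ε * e x - γ * i x + p * δ₃) x)
    (hr : HasDerivAt r (γ * i x + p * δ₄) x) :
    UpperRightDiniLE (orthantDefect s e i r)
      (2 * (β * B ^ 2 + ε + γ) * orthantDefect s e i r x) x := by
  have hc : 0 ≤ 1 - l := sub_nonneg.2 hl
  have hcB : 1 - l ≤ B := (le_abs_self _).trans hlB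
  have hD := ((((hs.upperRightDiniLE_negPart (by positivity)
      (neg_susceptible_rhs_le hβ hc hcB hiB hp hδ₁)).add
    (he.upperRightDiniLE_negPart (by positivity)
      (neg_exposed_rhs_le hβ hε hc hcB hsB hiB hp hδ₂))).add
    (hi.upperRightDiniLE_negPart (by positivity) (neg_infected_rhs_le hε hγ hp hδ₃))).add
    (hr.upperRightDiniLE_negPart (by positivity) fun _ => neg_recovered_rhs_le hγ hp hδ₄))
  refine hD.mono ?_
  have := mul_nonneg hβ (sq_nonneg B)
  have := negPart_nonneg (s x)
  have := negPart_nonneg (e x)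
  have := negPart_nonneg (i x)
  have := negPart_nonneg (r x)
  simp only [orthantDefect]
  nlinarith

end OrthantDefect

theorem border_control_orthant_positively_invariant_general
    (T : ℝ) (β ε γ : ℝ) (hβ : 0 < β) (hε : 0 < ε) (hγ : 0 < γ)
    (δ₁ δ₂ δ₃ δ₄ : ℝ) (hδ₁ : 0 ≤ δ₁) (hδ₂ : 0 ≤ δ₂) (hδ₃ : 0 ≤ δ₃) (hδ₄ : 0 ≤ δ₄)
    (lam φ : ℝ → ℝ)
    (hlam : ContinuousOn lam (Set.Icc 0 T))
    (hlam1 : ∀ t ∈ Set.Icc (0 : ℝ) T, lam t ≤ 1)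
    (hφ0 : ∀ t ∈ Set.Icc (0 : ℝ) T, 0 ≤ φ t)
    (s e i r : ℝ → ℝ)
    (hs : ∀ t ∈ Set.Icc (0 : ℝ) T,
      HasDerivAt s (-β * (1 - lam t) * s t * i t + φ t * δ₁) t)
    (he : ∀ t ∈ Set.Icc (0 : ℝ) T,
      HasDerivAt e (β * (1 - lam t) * s t * i t - ε * e t + φ t * δ₂) t)
    (hi : ∀ t ∈ Set.Icc (0 : ℝ) T,
      HasDerivAt i (ε * e t - γ * i t + φ t * δ₃) t)
    (hr : ∀ t ∈ Set.Icc (0 : ℝ) T, HasDerivAt r (γ * i t + φ t * δ₄) t)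
    (hs0 : 0 ≤ s 0) (he0 : 0 ≤ e 0) (hi0 : 0 ≤ i 0) (hr0 : 0 ≤ r 0) :
    ∀ t ∈ Set.Icc (0 : ℝ) T,
      0 ≤ s t ∧ 0 ≤ e t ∧ 0 ≤ i t ∧ 0 ≤ r t := by
  obtain ⟨B, hB⟩ := isCompact_Icc.exists_bound_of_continuousOn
    (f := fun t => (1 - lam t, s t, i t)) ((continuousOn_const.sub hlam).prodMk
      ((HasDerivAt.continuousOn hs).prodMk (HasDerivAt.continuousOn hi)))
  have hdefect : ∀ t ∈ Icc 0 T, orthantDefect s e i r t ≤ 0 := by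
    refine nonpos_of_upperRightDiniLE (K := 2 * (β * B ^ 2 + ε + γ))
      (.orthantDefect (HasDerivAt.continuousOn hs) (HasDerivAt.continuousOn he)
        (HasDerivAt.continuousOn hi) (HasDerivAt.continuousOn hr))
      (orthantDefect_nonpos_iff.2 ⟨hs0, he0, hi0, hr0⟩) fun x hx => ?_
    have hx' := Ico_subset_Icc_self hx
    exact upperRightDiniLE_orthantDefect hβ.le hε.le hγ.le hδ₁ hδ₂ hδ₃ hδ₄ (hlam1 x hx')
      (hφ0 x hx') ((norm_fst_le _).trans (hB x hx'))
      (((norm_fst_le _).trans (norm_snd_le _)).trans (hB x hx'))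
      (((norm_snd_le _).trans (norm_snd_le _)).trans (hB x hx'))
      (hs x hx') (he x hx') (hi x hx') (hr x hx')
  exact fun t ht => orthantDefect_nonpos_iff.1 (hdefect t ht)

/-- **The nonnegative orthant is positively invariant for the border-control SEIR model.**
For `β, ε, γ > 0`, inflow rates `δ₁, δ₂, δ₃, δ₄ ≥ 0`, continuous controls
`lam, φ` on `[0,T]` with `λ(t) ≤ 1` and `φ(t) ≥ 0`, and differentiable
`s, e, i, r` satisfying the SEIR system with border control on `[0,T]` with
nonnegative initial data, all components remain nonnegative on `[0,T]`. -/
theorem border_control_orthant_positively_invariant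
    (T : ℝ) (β ε γ : ℝ) (hβ : 0 < β) (hε : 0 < ε) (hγ : 0 < γ)
    (δ₁ δ₂ δ₃ δ₄ : ℝ) (hδ₁ : 0 ≤ δ₁) (hδ₂ : 0 ≤ δ₂) (hδ₃ : 0 ≤ δ₃) (hδ₄ : 0 ≤ δ₄)
    (lam φ : ℝ → ℝ)
    (hlam : ContinuousOn lam (Set.Icc 0 T)) (hφ : ContinuousOn φ (Set.Icc 0 T))
    (hlam1 : ∀ t ∈ Set.Icc (0 : ℝ) T, lam t ≤ 1)
    (hφ0 : ∀ t ∈ Set.Icc (0 : ℝ) T, 0 ≤ φ t)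
    (s e i r : ℝ → ℝ)
    (hs : ∀ t ∈ Set.Icc (0 : ℝ) T,
      HasDerivAt s (-β * (1 - lam t) * s t * i t + φ t * δ₁) t)
    (he : ∀ t ∈ Set.Icc (0 : ℝ) T,
      HasDerivAt e (β * (1 - lam t) * s t * i t - ε * e t + φ t * δ₂) t)
    (hi : ∀ t ∈ Set.Icc (0 : ℝ) T,
      HasDerivAt i (ε * e t - γ * i t + φ t * δ₃) t)
    (hr : ∀ t ∈ Set.Icc (0 : ℝ) T, HasDerivAt r (γ * i t + φ t * δ₄) t)
    (hs0 : 0 ≤ s 0) (he0 : 0 ≤ e 0) (hi0 : 0 ≤ i 0) (hr0 : 0 ≤ r 0) :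
    ∀ t ∈ Set.Icc (0 : ℝ) T,
      0 ≤ s t ∧ 0 ≤ e t ∧ 0 ≤ i t ∧ 0 ≤ r t :=
  border_control_orthant_positively_invariant_general T β ε γ hβ hε hγ δ₁ δ₂ δ₃ δ₄ hδ₁ hδ₂ hδ₃ hδ₄
    lam φ hlam hlam1 hφ0 s e i r hs he hi hr hs0 he0 hi0 hr0
end
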